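/- arXiv:2509.13751 — 3 statements merged into one kernel-verified Lean document; each statement's English description precedes it below -/
import Mathlib

section
/- Let n ≥ 1. There exists a constant M₀ > 0 (independent of k) such that for every k ∈ ℝⁿ with ‖k‖₁ := Σ_{j=1}^n |k_j| > 0, setting a₀ := (1/2)·arsinh(π/(2‖k‖₁)) and defining f_k : ℝⁿ → ℝ by f_k(x) = tanh(Σ_{j=1}^n k_j · sin x_j), the Fourier coefficients f̂_k(m) := (2π)^{-n} ∫_{[0,2π]^n} f_k(x) · exp(−i Σ_{j=1}^n m_j x_j) dx satisfy |f̂_k(m)| ≤ M₀ · exp(−a₀ · ‖m‖₁) for every m ∈ ℤⁿ, where ‖m‖₁ = Σ_{j=1}^n |m_j|. -/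
/-!
Shifting the contour of the `x_j`-integral from `ℝ` to `ℝ + i d_j` multiplies a Fourier
coefficient by `exp (m_j d_j)`: Cauchy's theorem on the rectangle `[0, 2π] × [0, d_j]`, whose
vertical sides cancel by `2π`-periodicity. Doing this in every variable (Fubini) with
`d_j = ∓a` against the sign of `m_j` gives the factor `exp (-a ‖m‖₁)`. For
`a = ½ arsinh (π / (2‖k‖₁))` we have `‖k‖₁ sinh a ≤ π / 4`, so on the polystrip `|Im z_j| ≤ a`
the argument `w` of `tanh` satisfies `|Im w| ≤ π / 4`; there `cosh w ≠ 0` and `‖tanh w‖ ≤ 1`,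
since `‖cosh w‖² - ‖sinh w‖² = cos (2 Im w) ≥ 0`. Hence `M₀ = 1` works.
-/

open Complex MeasureTheory Set
open scoped ComplexConjugate Real Interval

namespace Complex

lemma re_exp_mul_conj_exp_neg (z : ℂ) : (exp z * conj (exp (-z))).re = Real.cos (2 * z.im) := by
  rw [← exp_conj, ← exp_add, show z + conj (-z) = ((2 * z.im : ℝ) : ℂ) * I by
    rw [map_neg, ← sub_eq_add_neg, sub_conj], exp_ofReal_mul_I_re]

lemma four_mul_normSq_cosh (z : ℂ) :
    4 * normSq (cosh z) = normSq (exp z) + normSq (exp (-z)) + 2 * Real.cos (2 * z.im) := by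
  rw [← re_exp_mul_conj_exp_neg, ← normSq_add, ← two_cosh, normSq_mul]
  norm_num [normSq_ofNat]

lemma four_mul_normSq_sinh (z : ℂ) :
    4 * normSq (sinh z) = normSq (exp z) + normSq (exp (-z)) - 2 * Real.cos (2 * z.im) := by
  rw [← re_exp_mul_conj_exp_neg, ← normSq_sub, ← two_sinh, normSq_mul]
  norm_num [normSq_ofNat]

lemma cos_two_mul_im_nonneg {z : ℂ} (h : |z.im| ≤ π / 4) : 0 ≤ Real.cos (2 * z.im) := by
  apply Real.cos_nonneg_of_mem_Icc
  constructor <;> linarith [abs_le.1 h]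

lemma cosh_ne_zero_of_abs_im_le {z : ℂ} (h : |z.im| ≤ π / 4) : cosh z ≠ 0 := by
  intro h0
  have := four_mul_normSq_cosh z
  rw [h0, map_zero] at this
  nlinarith [normSq_pos.2 (exp_ne_zero z), normSq_nonneg (exp (-z)), cos_two_mul_im_nonneg h]

lemma norm_tanh_le_one_of_abs_im_le {z : ℂ} (h : |z.im| ≤ π / 4) : ‖tanh z‖ ≤ 1 := by
  rw [tanh_eq_sinh_div_cosh, norm_div, div_le_one (norm_pos_iff.2 (cosh_ne_zero_of_abs_im_le h)),
    ← sq_le_sq₀ (norm_nonneg _) (norm_nonneg _), ← normSq_eq_norm_sq, ← normSq_eq_norm_sq]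
  nlinarith [four_mul_normSq_cosh z, four_mul_normSq_sinh z, cos_two_mul_im_nonneg h]

lemma differentiableAt_tanh {z : ℂ} (h : cosh z ≠ 0) : DifferentiableAt ℂ tanh z := by
  simp only [funext tanh_eq_sinh_div_cosh]
  exact differentiable_sinh.differentiableAt.div differentiable_cosh.differentiableAt h

lemma abs_im_sin_le (z : ℂ) : |(sin z).im| ≤ Real.sinh |z.im| := by
  have him : (sin z).im = Real.cos z.re * Real.sinh z.im := by
    conv_lhs => rw [← re_add_im z]
    rw [sin_add_mul_I]
    simp [← ofReal_sin, ← ofReal_cos, ← ofReal_cosh, ← ofReal_sinh]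
  rw [him, abs_mul, ← Real.abs_sinh]
  exact mul_le_of_le_one_left (abs_nonneg _) (Real.abs_cos_le_one _)

end Complex

lemma Real.sinh_half_mul_arsinh_le {b : ℝ} (hb : 0 ≤ b) :
    Real.sinh (1 / 2 * Real.arsinh b) ≤ b / 2 := by
  set u := 1 / 2 * Real.arsinh b
  have hu : 0 ≤ u := by have := Real.arsinh_nonneg_iff.2 hb; positivity
  have hb' : b = 2 * Real.sinh u * Real.cosh u := by
    rw [← Real.sinh_two_mul, show 2 * u = Real.arsinh b by ring, Real.sinh_arsinh]
  nlinarith [Real.one_le_cosh u, Real.sinh_nonneg_iff.2 hu]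

lemma abs_im_sum_mul_sin_le {n : ℕ} (k : Fin n → ℝ) {z : Fin n → ℂ} {a : ℝ}
    (hz : ∀ j, |(z j).im| ≤ a) :
    |(∑ j, (k j : ℂ) * sin (z j)).im| ≤ (∑ j, |k j|) * Real.sinh a := by
  rw [im_sum, Finset.sum_mul]
  refine (Finset.abs_sum_le_sum_abs _ _).trans (Finset.sum_le_sum fun j _ => ?_)
  rw [im_ofReal_mul, abs_mul]
  gcongr
  exact (abs_im_sin_le _).trans (Real.sinh_le_sinh.2 (hz j))

section Fubini

variable {E : Type*} [NormedAddCommGroup E] {n : ℕ}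
  {a b : Fin (n + 1) → ℝ} {g : (Fin (n + 1) → ℝ) → E}

def finConsMeasurableEquiv (n : ℕ) : ℝ × (Fin n → ℝ) ≃ᵐ (Fin (n + 1) → ℝ) :=
  (MeasurableEquiv.piFinSuccAbove (fun _ => ℝ) 0).symm

@[simp]
lemma finConsMeasurableEquiv_apply (p : ℝ × (Fin n → ℝ)) :
    finConsMeasurableEquiv n p = Fin.cons p.1 p.2 := by
  simp [finConsMeasurableEquiv, MeasurableEquiv.piFinSuccAbove_symm_apply, Fin.insertNthEquiv]

lemma measurePreserving_finConsMeasurableEquiv :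
    MeasurePreserving (finConsMeasurableEquiv n) :=
  (volume_preserving_piFinSuccAbove (fun _ : Fin (n + 1) => ℝ) 0).symm

lemma finConsMeasurableEquiv_preimage_Icc (a b : Fin (n + 1) → ℝ) :
    finConsMeasurableEquiv n ⁻¹' Icc a b = Icc (a 0) (b 0) ×ˢ Icc (Fin.tail a) (Fin.tail b) := by
  ext p
  simp only [mem_preimage, finConsMeasurableEquiv_apply, mem_Icc, mem_prod, Fin.le_cons,
    Fin.cons_le]
  tauto

lemma setIntegral_Icc_fin_succ_eq_prod [NormedSpace ℝ E] (g : (Fin (n + 1) → ℝ) → E) :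
    ∫ x in Icc a b, g x =
      ∫ p in Icc (a 0) (b 0) ×ˢ Icc (Fin.tail a) (Fin.tail b), g (Fin.cons p.1 p.2) := by
  rw [← finConsMeasurableEquiv_preimage_Icc,
    ← measurePreserving_finConsMeasurableEquiv.setIntegral_preimage_emb
      (finConsMeasurableEquiv n).measurableEmbedding]
  simp only [finConsMeasurableEquiv_apply]

lemma MeasureTheory.IntegrableOn.comp_finCons (hg : IntegrableOn g (Icc a b)) :
    IntegrableOn (fun p : ℝ × (Fin n → ℝ) => g (Fin.cons p.1 p.2))
      (Icc (a 0) (b 0) ×ˢ Icc (Fin.tail a) (Fin.tail b)) := by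
  rw [← measurePreserving_finConsMeasurableEquiv.integrableOn_comp_preimage
    (finConsMeasurableEquiv n).measurableEmbedding, finConsMeasurableEquiv_preimage_Icc] at hg
  simpa only [Function.comp_def, finConsMeasurableEquiv_apply] using hg

lemma setIntegral_Icc_fin_succ [NormedSpace ℝ E] (hg : IntegrableOn g (Icc a b)) :
    ∫ x in Icc a b, g x =
      ∫ t in Icc (a 0) (b 0), ∫ y in Icc (Fin.tail a) (Fin.tail b), g (Fin.cons t y) := by
  rw [setIntegral_Icc_fin_succ_eq_prod, Measure.volume_eq_prod,
    setIntegral_prod _ (by simpa only [Measure.volume_eq_prod] using hg.comp_finCons)]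

lemma setIntegral_Icc_fin_succ_swap [NormedSpace ℝ E] (hg : IntegrableOn g (Icc a b)) :
    ∫ x in Icc a b, g x =
      ∫ y in Icc (Fin.tail a) (Fin.tail b), ∫ t in Icc (a 0) (b 0), g (Fin.cons t y) := by
  rw [setIntegral_Icc_fin_succ hg]
  apply integral_integral_swap
  rw [Measure.prod_restrict, ← Measure.volume_eq_prod]
  exact hg.comp_finCons

end Fubini

lemma setIntegral_Icc_mk_eq_of_differentiableOn {E : Type*} [NormedAddCommGroup E]
    [NormedSpace ℂ E] {g : ℂ → E} {a b d : ℝ} (hab : a ≤ b)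
    (hg : DifferentiableOn ℂ g ([[a, b]] ×ℂ [[0, d]])) (hper : ∀ y : ℝ, g ⟨b, y⟩ = g ⟨a, y⟩) :
    ∫ t in Icc a b, g ⟨t, 0⟩ = ∫ t in Icc a b, g ⟨t, d⟩ := by
  have hrect := integral_boundary_rect_eq_zero_of_differentiableOn g a ⟨b, d⟩ (by simpa using hg)
  have hvert : ∀ y : ℝ, g (b + y * I) = g (a + y * I) := fun y => by
    simpa only [mk_eq_add_mul_I] using hper y
  simp only [ofReal_re, ofReal_im, ofReal_zero, zero_mul, add_zero, hvert] at hrect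
  simp only [integral_Icc_eq_integral_Ioc, ← intervalIntegral.integral_of_le hab, mk_eq_add_mul_I]
  simpa [sub_eq_zero] using hrect

lemma setIntegral_Icc_mul_exp_eq_of_differentiableOn {φ : ℂ → ℂ} (m : ℤ) {d : ℝ}
    (hφ : DifferentiableOn ℂ φ ([[0, 2 * π]] ×ℂ [[0, d]]))
    (hper : ∀ y : ℝ, φ ⟨2 * π, y⟩ = φ ⟨0, y⟩) :
    ∫ t in Icc 0 (2 * π), φ ⟨t, 0⟩ * exp (-I * (m * t)) =
      exp (m * d) * ∫ t in Icc 0 (2 * π), φ ⟨t, d⟩ * exp (-I * (m * t)) := by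
  have hexp : ∀ t s : ℝ, exp (-I * (m * (⟨t, s⟩ : ℂ))) = exp (m * s) * exp (-I * (m * t)) := by
    intro t s
    rw [← exp_add, mk_eq_add_mul_I]
    ring_nf
    simp [I_sq]
  rw [← integral_const_mul]
  simp only [mul_left_comm (exp _), ← hexp]
  refine setIntegral_Icc_mk_eq_of_differentiableOn (g := fun z => φ z * exp (-I * (m * z)))
    Real.two_pi_pos.le (hφ.mul (by fun_prop)) fun y => ?_
  have hmul : exp (-I * (m * (2 * π : ℝ))) = 1 := by
    rw [show -I * (m * (2 * π : ℝ)) = (-m : ℤ) * (2 * π * I) by push_cast; ring,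
      exp_int_mul_two_pi_mul_I]
  rw [hper, hexp (2 * π) y, hexp 0 y, hmul, ofReal_zero, mul_zero, mul_zero, exp_zero]

section Polystrip

variable {n : ℕ}

def ofReIm (x y : Fin n → ℝ) : Fin n → ℂ := fun j => ⟨x j, y j⟩

def imStrip (d : Fin n → ℝ) : Set (Fin n → ℂ) := {z | ∀ j, (z j).im ∈ [[0, d j]]}

def IsTwoPiPeriodic (F : (Fin n → ℂ) → ℂ) : Prop :=
  ∀ j z, F (Function.update z j (z j + 2 * π)) = F z

noncomputable def shiftedFourierIntegral (F : (Fin n → ℂ) → ℂ) (m : Fin n → ℤ)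
    (s : Fin n → ℝ) : ℂ :=
  ∫ x in Icc (0 : Fin n → ℝ) (fun _ => 2 * π), F (ofReIm x s) * exp (-I * ∑ j, (m j : ℂ) * x j)

lemma isTwoPiPeriodic_comp_sum_mul_sin (φ : ℂ → ℂ) (k : Fin n → ℂ) :
    IsTwoPiPeriodic fun z => φ (∑ j, k j * sin (z j)) := fun j z => by
  dsimp only
  congr 2 with i
  rcases eq_or_ne i j with rfl | h
  · simp [sin_add_two_pi]
  · simp [Function.update_of_ne h]

lemma continuous_ofReIm (s : Fin n → ℝ) : Continuous fun x => ofReIm x s := by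
  refine continuous_pi fun j => ?_
  simp only [ofReIm, mk_eq_add_mul_I]
  fun_prop

lemma ofReIm_mem_imStrip {s d : Fin n → ℝ} (hs : ∀ j, s j ∈ [[0, d j]]) (x : Fin n → ℝ) :
    ofReIm x s ∈ imStrip d :=
  hs

lemma continuous_comp_ofReIm {F : (Fin n → ℂ) → ℂ} {s d : Fin n → ℝ}
    (hF : ContinuousOn F (imStrip d)) (hs : ∀ j, s j ∈ [[0, d j]]) :
    Continuous fun x => F (ofReIm x s) :=
  hF.comp_continuous (continuous_ofReIm s) (ofReIm_mem_imStrip hs)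

lemma integrableOn_mul_exp {F : (Fin n → ℂ) → ℂ} {s : Fin n → ℝ} (m : Fin n → ℤ)
    (hF : Continuous fun x => F (ofReIm x s)) :
    IntegrableOn (fun x => F (ofReIm x s) * exp (-I * ∑ j, (m j : ℂ) * x j))
      (Icc 0 fun _ => 2 * π) :=
  (hF.mul (by fun_prop)).integrableOn_Icc

lemma norm_shiftedFourierIntegral_le {F : (Fin n → ℂ) → ℂ} {s : Fin n → ℝ} {B : ℝ}
    (hB : ∀ x, ‖F (ofReIm x s)‖ ≤ B) (m : Fin n → ℤ) :
    ‖shiftedFourierIntegral F m s‖ ≤ B * (2 * π) ^ n := by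
  have hvol : volume (Icc (0 : Fin n → ℝ) fun _ => 2 * π) = ENNReal.ofReal ((2 * π) ^ n) := by
    simp [Real.volume_Icc_pi, ENNReal.ofReal_pow Real.two_pi_pos.le]
  refine (norm_setIntegral_le_of_norm_le_const (C := B) (by simp [hvol]) fun x _ => ?_).trans_eq ?_
  · rw [norm_mul, norm_exp]
    simpa [← ofReal_intCast, ← ofReal_mul, ← ofReal_sum] using hB x
  · rw [measureReal_def, hvol, ENNReal.toReal_ofReal (by positivity)]

lemma ofReIm_cons (t : ℝ) (y : Fin n → ℝ) (s : Fin (n + 1) → ℝ) :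
    ofReIm (Fin.cons t y) s = Fin.cons ⟨t, s 0⟩ (ofReIm y (Fin.tail s)) := by
  funext j
  exact Fin.cases rfl (fun _ => rfl) j

lemma cons_mem_imStrip {d : Fin (n + 1) → ℝ} {c : ℂ} {w : Fin n → ℂ} (hc : c.im ∈ [[0, d 0]])
    (hw : w ∈ imStrip (Fin.tail d)) : (Fin.cons c w : Fin (n + 1) → ℂ) ∈ imStrip d :=
  Fin.cases hc hw

lemma exp_neg_I_mul_sum_cons (m : Fin (n + 1) → ℤ) (t : ℝ) (y : Fin n → ℝ) :
    exp (-I * ∑ j, (m j : ℂ) * ((Fin.cons t y : Fin (n + 1) → ℝ) j : ℂ)) =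
      exp (-I * (m 0 * t)) * exp (-I * ∑ j, (Fin.tail m j : ℂ) * y j) := by
  rw [Fin.sum_univ_succ, mul_add, exp_add]
  simp [Fin.tail]

section Succ

variable {F : (Fin (n + 1) → ℂ) → ℂ} {d s : Fin (n + 1) → ℝ}

lemma shiftedFourierIntegral_succ (m : Fin (n + 1) → ℤ)
    (hF : Continuous fun x => F (ofReIm x s)) :
    shiftedFourierIntegral F m s = ∫ t in Icc 0 (2 * π), exp (-I * (m 0 * t)) *
      shiftedFourierIntegral (fun w => F (Fin.cons ⟨t, s 0⟩ w)) (Fin.tail m) (Fin.tail s) := by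
  rw [shiftedFourierIntegral, setIntegral_Icc_fin_succ (integrableOn_mul_exp m hF)]
  simp only [shiftedFourierIntegral, ofReIm_cons, exp_neg_I_mul_sum_cons, ← integral_const_mul]
  congr 1 with t
  congr 1 with y
  ring

lemma shiftedFourierIntegral_succ_swap (m : Fin (n + 1) → ℤ)
    (hF : Continuous fun x => F (ofReIm x s)) :
    shiftedFourierIntegral F m s = ∫ y in Icc 0 (fun _ => 2 * π),
      exp (-I * ∑ j, (Fin.tail m j : ℂ) * y j) *
        ∫ t in Icc 0 (2 * π), F (Fin.cons ⟨t, s 0⟩ (ofReIm y (Fin.tail s))) *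
          exp (-I * (m 0 * t)) := by
  rw [shiftedFourierIntegral, setIntegral_Icc_fin_succ_swap (integrableOn_mul_exp m hF)]
  simp only [ofReIm_cons, exp_neg_I_mul_sum_cons, ← integral_const_mul]
  congr 1 with y
  congr 1 with t
  ring

lemma IsTwoPiPeriodic.comp_cons (hper : IsTwoPiPeriodic F) (c : ℂ) :
    IsTwoPiPeriodic fun w => F (Fin.cons c w) := fun j z => by
  simpa [Fin.cons_update] using hper j.succ (Fin.cons c z)

lemma DifferentiableOn.comp_cons (hF : DifferentiableOn ℂ F (imStrip d)) {c : ℂ}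
    (hc : c.im ∈ [[0, d 0]]) :
    DifferentiableOn ℂ (fun w => F (Fin.cons c w)) (imStrip (Fin.tail d)) :=
  hF.comp ((differentiable_const c).finCons differentiable_id).differentiableOn
    fun _ hw => cons_mem_imStrip hc hw

lemma setIntegral_Icc_cons_mul_exp_eq (hF : DifferentiableOn ℂ F (imStrip d))
    (hper : IsTwoPiPeriodic F) (m : ℤ) {v : Fin n → ℂ} (hv : v ∈ imStrip (Fin.tail d)) :
    ∫ t in Icc 0 (2 * π), F (Fin.cons ⟨t, 0⟩ v) * exp (-I * (m * t)) =
      exp (m * d 0) * ∫ t in Icc 0 (2 * π), F (Fin.cons ⟨t, d 0⟩ v) * exp (-I * (m * t)) := by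
  refine setIntegral_Icc_mul_exp_eq_of_differentiableOn m
    (hF.comp (Differentiable.finCons (F' := fun _ => ℂ) differentiable_id
      (differentiable_const v)).differentiableOn
      fun w hw => cons_mem_imStrip (mem_reProdIm.1 hw).2 hv) fun y => ?_
  show F (Fin.cons ⟨2 * π, y⟩ v) = F (Fin.cons ⟨0, y⟩ v)
  rw [← hper 0 (Fin.cons ⟨0, y⟩ v), Fin.update_cons_zero, Fin.cons_zero]
  congr 2
  apply Complex.ext <;> simp

end Succ

theorem shiftedFourierIntegral_zero_eq {F : (Fin n → ℂ) → ℂ} {d : Fin n → ℝ}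
    (hF : DifferentiableOn ℂ F (imStrip d)) (hper : IsTwoPiPeriodic F) (m : Fin n → ℤ) :
    shiftedFourierIntegral F m 0 = exp (∑ j, (m j : ℂ) * d j) * shiftedFourierIntegral F m d := by
  induction n with
  | zero =>
    have hx : ∀ x : Fin 0 → ℝ, ofReIm x 0 = ofReIm x d := fun _ => Subsingleton.elim _ _
    simp only [Finset.univ_eq_empty, Finset.sum_empty, exp_zero, one_mul, shiftedFourierIntegral,
      hx]
  | succ n ih =>
    have hcont := fun s => continuous_comp_ofReIm (F := F) (s := s) hF.continuousOn
    have hmid : ∀ j, (Fin.cons 0 (Fin.tail d) : Fin (n + 1) → ℝ) j ∈ [[0, d j]] := fun j => by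
      cases j using Fin.cases <;> simp [Fin.tail]
    calc shiftedFourierIntegral F m 0
        = ∫ t in Icc 0 (2 * π), exp (-I * (m 0 * t)) *
            shiftedFourierIntegral (fun w => F (Fin.cons ⟨t, 0⟩ w)) (Fin.tail m) 0 := by
          simpa [show Fin.tail (0 : Fin (n + 1) → ℝ) = 0 from rfl] using
            shiftedFourierIntegral_succ m (hcont 0 fun j => left_mem_uIcc)
      _ = ∫ t in Icc 0 (2 * π), exp (-I * (m 0 * t)) *
            (exp (∑ j, (Fin.tail m j : ℂ) * Fin.tail d j) *
              shiftedFourierIntegral (fun w => F (Fin.cons ⟨t, 0⟩ w)) (Fin.tail m)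
                (Fin.tail d)) := by
          congr 1 with t
          rw [ih (hF.comp_cons left_mem_uIcc) (hper.comp_cons _)]
      _ = exp (∑ j, (Fin.tail m j : ℂ) * Fin.tail d j) *
            shiftedFourierIntegral F m (Fin.cons 0 (Fin.tail d)) := by
          rw [shiftedFourierIntegral_succ m (hcont _ hmid), ← integral_const_mul]
          simp only [Fin.cons_zero, Fin.tail_cons, mul_left_comm]
      _ = exp (∑ j, (Fin.tail m j : ℂ) * Fin.tail d j) * exp (m 0 * d 0) *
            shiftedFourierIntegral F m d := by
          rw [shiftedFourierIntegral_succ_swap m (hcont _ hmid),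
            shiftedFourierIntegral_succ_swap m (hcont _ fun j => right_mem_uIcc)]
          simp only [Fin.cons_zero, Fin.tail_cons, ← integral_const_mul,
            setIntegral_Icc_cons_mul_exp_eq hF hper _
              (ofReIm_mem_imStrip (fun j => right_mem_uIcc) _)]
          congr 1 with y
          congr 1 with t
          ring
      _ = exp (∑ j, (m j : ℂ) * d j) * shiftedFourierIntegral F m d := by
          rw [Fin.sum_univ_succ, exp_add, mul_comm (exp _) (exp _)]
          rfl

theorem norm_shiftedFourierIntegral_zero_le {F : (Fin n → ℂ) → ℂ} {a B : ℝ} (ha : 0 ≤ a)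
    (hF : DifferentiableOn ℂ F {z | ∀ j, |(z j).im| ≤ a}) (hper : IsTwoPiPeriodic F)
    (hB : ∀ z, (∀ j, |(z j).im| ≤ a) → ‖F z‖ ≤ B) (m : Fin n → ℤ) :
    ‖shiftedFourierIntegral F m 0‖ ≤ B * (2 * π) ^ n * Real.exp (-a * ∑ j, |(m j : ℝ)|) := by
  -- shift each variable against the sign of its frequency
  set d : Fin n → ℝ := fun j => if 0 ≤ m j then -a else a
  have hd : ∀ j, |d j| = a := fun j => by
    simp only [d]; split_ifs <;> simp [abs_of_nonneg ha]
  have hmd : ∀ j, (m j : ℝ) * d j = -a * |(m j : ℝ)| := fun j => by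
    simp only [d]; split_ifs with h
    · rw [abs_of_nonneg (by exact_mod_cast h)]; ring
    · rw [abs_of_neg (by exact_mod_cast not_le.1 h)]; ring
  have hstrip : imStrip d ⊆ {z | ∀ j, |(z j).im| ≤ a} := fun z hz j => by
    simpa [hd] using abs_sub_left_of_mem_uIcc (hz j)
  have hexp : ‖exp (∑ j, (m j : ℂ) * d j)‖ = Real.exp (-a * ∑ j, |(m j : ℝ)|) := by
    rw [norm_exp, Finset.mul_sum]
    simp [← hmd, ← ofReal_intCast, ← ofReal_mul, ← ofReal_sum]
  rw [shiftedFourierIntegral_zero_eq (hF.mono hstrip) hper m, norm_mul, hexp, mul_comm]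
  gcongr
  exact norm_shiftedFourierIntegral_le
    (fun x => hB _ (hstrip (ofReIm_mem_imStrip (fun _ => right_mem_uIcc) x))) m

end Polystrip

theorem fourier_coeff_tanh_sum_sin_exp_decay_general (n : ℕ) :
    ∃ M₀ : ℝ, 0 < M₀ ∧
      ∀ k : Fin n → ℝ, 0 < ∑ j, |k j| →
        ∀ m : Fin n → ℤ,
          ‖(((2 * Real.pi : ℂ) ^ n)⁻¹ *
                ∫ x in Set.Icc (0 : Fin n → ℝ) (fun _ => 2 * Real.pi),
                  (Real.tanh (∑ j, k j * Real.sin (x j)) : ℂ) *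
                    Complex.exp (-Complex.I * ∑ j, (m j : ℂ) * (x j : ℂ)))‖
            ≤ M₀ *
              Real.exp
                (-((1 / 2) * Real.arsinh (Real.pi / (2 * ∑ j, |k j|))) *
                  ∑ j, |(m j : ℝ)|) := by
  refine ⟨1, one_pos, fun k hk m => ?_⟩
  set a := 1 / 2 * Real.arsinh (π / (2 * ∑ j, |k j|))
  have ha : 0 ≤ a := mul_nonneg (by norm_num) (Real.arsinh_nonneg_iff.2 (by positivity))
  have hsinh : (∑ j, |k j|) * Real.sinh a ≤ π / 4 :=
    calc (∑ j, |k j|) * Real.sinh a ≤ (∑ j, |k j|) * (π / (2 * ∑ j, |k j|) / 2) :=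
          mul_le_mul_of_nonneg_left (Real.sinh_half_mul_arsinh_le (by positivity)) hk.le
      _ = π / 4 := by field_simp; ring
  set u : (Fin n → ℂ) → ℂ := fun z => ∑ j, (k j : ℂ) * sin (z j)
  have him : ∀ z, (∀ j, |(z j).im| ≤ a) → |(u z).im| ≤ π / 4 := fun z hz =>
    (abs_im_sum_mul_sin_le k hz).trans hsinh
  have hdiff : DifferentiableOn ℂ (tanh ∘ u) {z | ∀ j, |(z j).im| ≤ a} := fun z hz =>
    ((differentiableAt_tanh (cosh_ne_zero_of_abs_im_le (him z hz))).comp z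
      ((by fun_prop : Differentiable ℂ u) z)).differentiableWithinAt
  have hdecay := norm_shiftedFourierIntegral_zero_le ha hdiff
    (isTwoPiPeriodic_comp_sum_mul_sin tanh (fun j => (k j : ℂ)))
    (fun z hz => norm_tanh_le_one_of_abs_im_le (him z hz)) m
  have hu : ∀ x, (tanh ∘ u) (ofReIm x 0) = Real.tanh (∑ j, k j * Real.sin (x j)) := fun x => by
    push_cast [ofReal_tanh]
    rfl
  simp only [shiftedFourierIntegral, hu] at hdecay
  rw [norm_mul, norm_inv, norm_pow, show ‖(2 * π : ℂ)‖ = 2 * π by simp [abs_of_pos Real.pi_pos],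
    inv_mul_le_iff₀ (by positivity)]
  linarith

/-- uniform-in-`k` exponential decay of the Fourier coefficients of
`f_k(x) = tanh (∑ j, k j * sin x_j)`, with rate `a₀ = (1/2) arsinh (π/(2‖k‖₁))`. -/
theorem fourier_coeff_tanh_sum_sin_exp_decay (n : ℕ) (hn : 1 ≤ n) :
    ∃ M₀ : ℝ, 0 < M₀ ∧
      ∀ k : Fin n → ℝ, 0 < ∑ j, |k j| →
        ∀ m : Fin n → ℤ,
          ‖(((2 * Real.pi : ℂ) ^ n)⁻¹ *
                ∫ x in Set.Icc (0 : Fin n → ℝ) (fun _ => 2 * Real.pi),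
                  (Real.tanh (∑ j, k j * Real.sin (x j)) : ℂ) *
                    Complex.exp (-Complex.I * ∑ j, (m j : ℂ) * (x j : ℂ)))‖
            ≤ M₀ *
              Real.exp
                (-((1 / 2) * Real.arsinh (Real.pi / (2 * ∑ j, |k j|))) *
                  ∑ j, |(m j : ℝ)|) :=
  fourier_coeff_tanh_sum_sin_exp_decay_general n
end

section
/- Let n ≥ 1 and ε > 0. There exists a constant C > 0, depending only on n and ε but not on k, such that for every k ∈ ℝⁿ with ‖k‖₁ := Σ_{j=1}^n |k_j| ≥ 1, every m ∈ ℤⁿ with ‖m‖₁ := Σ_{j=1}^n |m_j| ≥ C·‖k‖₁ satisfies |f̂_k(m)| ≤ ε, where f̂_k(m) = (2π)^{-n} ∫_{[0,2π]^n} tanh(Σ_{j=1}^n k_j · sin x_j) · exp(−i Σ_{j=1}^n m_j x_j) dx. Equivalently, the ε-truncated frequency support S_k := inf{ ‖m‖₁ : |f̂_k(j)| ≤ ε for all j ∈ ℤⁿ with ‖j‖₁ > ‖m‖₁ } satisfies S_k ≤ C·‖k‖₁. -/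
/-!
Pick a coordinate `j` with `|m_j|` maximal, so that `‖m‖₁ ≤ n |m_j|`, and integrate in `x_j` first.
With the other coordinates frozen, the integrand is `g t * e^{-i m_j t}` where
`g t = tanh (k_j sin t + a)` is `2π`-periodic and `|k_j|`-Lipschitz. Shifting `t` by `π / m_j`
flips the sign of the exponential, so `2 ∫ g e^{-i m_j t} = ∫ (g t - g (t + π / m_j)) e^{-i m_j t}`,
which bounds the one-dimensional integral by `π² |k_j| / |m_j|`. Integrating over the remaining
`n - 1` coordinates and normalising gives `|f̂_k(m)| ≤ π |k_j| / (2 |m_j|) ≤ π n ‖k‖₁ / (2 ‖m‖₁)`,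
which is at most `ε` as soon as `‖m‖₁ ≥ (π n / (2 ε)) ‖k‖₁`.
-/

open MeasureTheory Real
open Complex (I)

theorem Real.hasDerivAt_tanh (x : ℝ) : HasDerivAt tanh (1 / cosh x ^ 2) x := by
  have h := (hasDerivAt_sinh x).div (hasDerivAt_cosh x) (cosh_pos x).ne'
  rw [show sinh / cosh = tanh from funext fun y => (tanh_eq_sinh_div_cosh y).symm] at h
  exact h.congr_deriv (by rw [← cosh_sq_sub_sinh_sq x]; ring)

theorem Real.lipschitzWith_tanh : LipschitzWith 1 tanh := by
  refine lipschitzWith_of_nnnorm_deriv_le (fun x => (hasDerivAt_tanh x).differentiableAt)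
    fun x => ?_
  rw [(hasDerivAt_tanh x).deriv, ← NNReal.coe_le_coe, coe_nnnorm, norm_of_nonneg (by positivity),
    NNReal.coe_one, div_le_one (by positivity)]
  nlinarith [one_le_cosh x]

@[fun_prop]
theorem Real.continuous_tanh : Continuous tanh :=
  lipschitzWith_tanh.continuous

theorem norm_exp_neg_I_mul (w : ℂ) : ‖Complex.exp (-I * w)‖ = Real.exp w.im := by
  simp [Complex.norm_exp]

theorem exp_neg_I_mul_int_mul_add_pi_div (M : ℤ) (hM : M ≠ 0) (t : ℝ) :
    Complex.exp (-I * (M * ((t + π / M : ℝ) : ℂ))) = -Complex.exp (-I * (M * t)) := by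
  have hM' : (M : ℂ) ≠ 0 := Int.cast_ne_zero.2 hM
  rw [show -I * (M * ((t + π / M : ℝ) : ℂ)) = -I * (M * t) + -(π * I) by
    push_cast; field_simp; ring, Complex.exp_add, Complex.exp_neg, Complex.exp_pi_mul_I]
  ring

theorem periodic_exp_neg_I_mul_int_mul (M : ℤ) :
    Function.Periodic (fun t : ℝ => Complex.exp (-I * (M * t))) (2 * π) := fun t => by
  simp only
  rw [show -I * (M * ((t + 2 * π : ℝ) : ℂ)) = -I * (M * t) + (-M : ℤ) * (2 * π * I) by
    push_cast; ring, Complex.exp_add, Complex.exp_int_mul_two_pi_mul_I, mul_one]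

theorem norm_intervalIntegral_mul_exp_le_of_lipschitzWith {g : ℝ → ℂ} {L : NNReal}
    (hg : LipschitzWith L g) (hper : Function.Periodic g (2 * π)) {M : ℤ} (hM : M ≠ 0) :
    ‖∫ t in (0)..(2 * π), g t * Complex.exp (-I * (M * t))‖ ≤ π ^ 2 * L / |(M : ℝ)| := by
  set e : ℝ → ℂ := fun t => Complex.exp (-I * (M * t))
  have he : Continuous e := by fun_prop
  have hge : Function.Periodic (fun t => g t * e t) (2 * π) :=
    hper.mul (periodic_exp_neg_I_mul_int_mul M)
  have hshift : ∫ t in (0)..(2 * π), g t * e t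
      = -∫ t in (0)..(2 * π), g (t + π / M) * e t := calc
    _ = ∫ t in (0)..(2 * π), g (t + π / M) * e (t + π / M) := by
      rw [intervalIntegral.integral_comp_add_right (fun t => g t * e t), zero_add, add_comm,
        hge.intervalIntegral_add_eq _ 0, zero_add]
    _ = _ := by
      simp only [e, exp_neg_I_mul_int_mul_add_pi_div M hM, mul_neg, intervalIntegral.integral_neg]
  have htwice : 2 * ∫ t in (0)..(2 * π), g t * e t
      = ∫ t in (0)..(2 * π), (g t - g (t + π / M)) * e t := by
    have hgc := hg.continuous
    simp only [sub_mul]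
    rw [intervalIntegral.integral_sub (Continuous.intervalIntegrable (by fun_prop) _ _)
      (Continuous.intervalIntegrable (by fun_prop) _ _)]
    linear_combination hshift
  have hpt : ∀ t ∈ Set.uIoc 0 (2 * π), ‖(g t - g (t + π / M)) * e t‖ ≤ L * (π / |(M : ℝ)|) :=
    fun t _ => by
    have := hg.dist_le_mul t (t + π / M)
    rw [dist_eq_norm, Real.dist_eq, sub_add_cancel_left, abs_neg, abs_div, abs_of_pos pi_pos]
      at this
    rw [norm_mul, norm_exp_neg_I_mul]
    simpa using this
  have := intervalIntegral.norm_integral_le_of_norm_le_const hpt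
  rw [← htwice, norm_mul, Complex.norm_two, sub_zero, abs_of_pos two_pi_pos] at this
  calc _ ≤ L * (π / |(M : ℝ)|) * (2 * π) / 2 := by linarith
    _ = _ := by ring

theorem norm_setIntegral_Icc_pi_le {E : Type*} [NormedAddCommGroup E] [NormedSpace ℝ E]
    {n : ℕ} {a b : ℝ} (hab : a ≤ b) {F : (Fin (n + 1) → ℝ) → E}
    (hF : IntegrableOn F (Set.Icc (fun _ => a) (fun _ => b))) (j : Fin (n + 1)) {B : ℝ}
    (hB : ∀ y : Fin n → ℝ, ‖∫ t in a..b, F (j.insertNth t y)‖ ≤ B) :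
    ‖∫ x in Set.Icc (fun _ => a) (fun _ => b), F x‖ ≤ B * (b - a) ^ n := by
  set μ := volume.restrict (Set.Icc a b)
  have hvol : volume.restrict (Set.Icc (fun _ => a) (fun _ => b))
      = Measure.pi fun _ : Fin (n + 1) => μ := by
    rw [← Set.pi_univ_Icc, volume_pi, Measure.restrict_pi_pi]
  rw [IntegrableOn, hvol] at hF
  have hsplit := (measurePreserving_piFinSuccAbove (fun _ => μ) j).symm
  have hFsplit := (hsplit.integrable_comp_emb (MeasurableEquiv.measurableEmbedding _)).2 hF
  rw [hvol, ← hsplit.integral_comp', integral_prod_symm _ (by exact hFsplit)]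
  calc _ ≤ B * (Measure.pi fun _ : Fin n => μ).real Set.univ := by
        refine norm_integral_le_of_norm_le_const (ae_of_all _ fun y => ?_)
        rw [integral_Icc_eq_integral_Ioc, ← intervalIntegral.integral_of_le hab]
        exact hB y
    _ = B * (b - a) ^ n := by
        simp [Measure.real, Measure.pi_univ, μ, hab]

theorem lipschitzWith_tanh_mul_sin_add (c a : ℝ) :
    LipschitzWith ‖c‖₊ fun t => (tanh (c * sin t + a) : ℂ) := by
  refine LipschitzWith.of_dist_le_mul fun s t => ?_
  rw [Complex.isometry_ofReal.dist_eq, coe_nnnorm]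
  calc dist (tanh (c * sin s + a)) (tanh (c * sin t + a))
      ≤ 1 * dist (c * sin s + a) (c * sin t + a) := lipschitzWith_tanh.dist_le_mul _ _
    _ = ‖c‖ * dist (sin s) (sin t) := by simp [Real.dist_eq, ← mul_sub, abs_mul]
    _ ≤ ‖c‖ * dist s t := by
      gcongr; simpa using lipschitzWith_sin.dist_le_mul s t

theorem norm_intervalIntegral_tanh_mul_sin_add_mul_exp_le (c a : ℝ) {M : ℤ} (hM : M ≠ 0) :
    ‖∫ t in (0)..(2 * π), (tanh (c * sin t + a) : ℂ) * Complex.exp (-I * (M * t))‖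
      ≤ π ^ 2 * |c| / |(M : ℝ)| := by
  have hper : Function.Periodic (fun t => (tanh (c * sin t + a) : ℂ)) (2 * π) := fun t => by
    simp only [sin_add_two_pi]
  simpa using norm_intervalIntegral_mul_exp_le_of_lipschitzWith
    (lipschitzWith_tanh_mul_sin_add c a) hper hM

theorem norm_setIntegral_tanh_sum_sin_mul_exp_le {n : ℕ} (k : Fin (n + 1) → ℝ)
    (m : Fin (n + 1) → ℤ) {j : Fin (n + 1)} (hmj : m j ≠ 0) :
    ‖∫ x in Set.Icc (0 : Fin (n + 1) → ℝ) (fun _ => 2 * π),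
        (tanh (∑ i, k i * sin (x i)) : ℂ) * Complex.exp (-I * ∑ i, (m i : ℂ) * (x i : ℂ))‖
      ≤ π ^ 2 * |k j| / |(m j : ℝ)| * (2 * π) ^ n := by
  refine (norm_setIntegral_Icc_pi_le (E := ℂ) (B := π ^ 2 * |k j| / |(m j : ℝ)|)
    two_pi_pos.le ?_ j fun y => ?_).trans_eq (by rw [sub_zero])
  · exact Continuous.integrableOn_Icc (by fun_prop)
  have hsplit : ∀ t : ℝ, (tanh (∑ i, k i * sin (j.insertNth (α := fun _ => ℝ) t y i)) : ℂ)
      * Complex.exp (-I * ∑ i, (m i : ℂ) * ((j.insertNth (α := fun _ => ℝ) t y i : ℝ) : ℂ))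
      = (tanh (k j * sin t + ∑ i, k (j.succAbove i) * sin (y i)) : ℂ) * Complex.exp (-I * (m j * t))
        * Complex.exp (-I * ∑ i, (m (j.succAbove i) : ℂ) * (y i : ℂ)) := fun t => by
    simp only [Fin.sum_univ_succAbove _ j, Fin.insertNth_apply_same,
      Fin.insertNth_apply_succAbove, mul_assoc, ← Complex.exp_add, mul_add, neg_mul]
  simp only [hsplit, intervalIntegral.integral_mul_const, norm_mul, norm_exp_neg_I_mul]
  have him : (∑ i, (m (j.succAbove i) : ℂ) * (y i : ℂ)).im = 0 := by simp [Complex.im_sum]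
  rw [him, Real.exp_zero, mul_one]
  exact norm_intervalIntegral_tanh_mul_sin_add_mul_exp_le _ _ hmj

theorem norm_fourierCoeff_tanh_sum_sin_le {n : ℕ} (k : Fin (n + 1) → ℝ)
    (m : Fin (n + 1) → ℤ) {j : Fin (n + 1)} (hmj : m j ≠ 0) :
    ‖((2 * π : ℂ) ^ (n + 1))⁻¹ * ∫ x in Set.Icc (0 : Fin (n + 1) → ℝ) (fun _ => 2 * π),
        (tanh (∑ i, k i * sin (x i)) : ℂ) * Complex.exp (-I * ∑ i, (m i : ℂ) * (x i : ℂ))‖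
      ≤ π * |k j| / (2 * |(m j : ℝ)|) := by
  have h2π : ‖(2 * π : ℂ)‖ = 2 * π := by
    rw [norm_mul, Complex.norm_two, Complex.norm_real, norm_of_nonneg pi_pos.le]
  rw [norm_mul, norm_inv, norm_pow, h2π]
  calc _ ≤ ((2 * π) ^ (n + 1))⁻¹ * (π ^ 2 * |k j| / |(m j : ℝ)| * (2 * π) ^ n) := by
        gcongr; exact norm_setIntegral_tanh_sum_sin_mul_exp_le k m hmj
    _ = _ := by
        have := pi_pos.ne'
        field_simp
        ring

/-- Proposition 4.1: for fixed `n ≥ 1` and `ε > 0` there is a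
constant `C > 0`, independent of `k`, such that for every `k` with `‖k‖₁ ≥ 1`,
all Fourier coefficients `f̂_k(m)` of `f_k(x) = tanh (∑ j, k j * sin x_j)` with
`‖m‖₁ ≥ C ‖k‖₁` are bounded by `ε`; i.e. the `ε`-truncated frequency support of
`f_k` grows at most linearly in `‖k‖₁`. -/
theorem freq_support_linear_in_k (n : ℕ) (hn : 1 ≤ n) (ε : ℝ) (hε : 0 < ε) :
    ∃ C : ℝ, 0 < C ∧
      ∀ k : Fin n → ℝ, 1 ≤ ∑ j, |k j| →
        ∀ m : Fin n → ℤ, (∑ j, |(m j : ℝ)|) ≥ C * ∑ j, |k j| →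
          ‖
              (((2 * Real.pi : ℂ) ^ n)⁻¹ *
                ∫ x in Set.Icc (0 : Fin n → ℝ) (fun _ => 2 * Real.pi),
                  (Real.tanh (∑ j, k j * Real.sin (x j)) : ℂ) *
                    Complex.exp (-Complex.I * ∑ j, (m j : ℂ) * (x j : ℂ)))‖
            ≤ ε := by
  obtain ⟨n, rfl⟩ : ∃ n', n = n' + 1 := ⟨n - 1, by omega⟩
  refine ⟨π * (n + 1) / (2 * ε), by positivity, fun k hk m hm => ?_⟩
  obtain ⟨j, -, hj⟩ := Finset.univ.exists_max_image (fun i => |(m i : ℝ)|) Finset.univ_nonempty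
  have hmj : ∑ i, |(m i : ℝ)| ≤ (n + 1) * |(m j : ℝ)| := by
    simpa using Finset.univ.sum_le_card_nsmul _ _ fun i hi => hj i hi
  have hkj : |k j| ≤ ∑ i, |k i| :=
    Finset.single_le_sum (fun i _ => abs_nonneg (k i)) (Finset.mem_univ j)
  have hkm : π * ∑ i, |k i| ≤ 2 * ε * |(m j : ℝ)| := calc
    _ = 2 * ε / (n + 1) * (π * (n + 1) / (2 * ε) * ∑ i, |k i|) := by field_simp
    _ ≤ 2 * ε / (n + 1) * ((n + 1) * |(m j : ℝ)|) :=
      mul_le_mul_of_nonneg_left (hm.trans hmj) (by positivity)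
    _ = 2 * ε * |(m j : ℝ)| := by field_simp
  have hmj_pos : 0 < |(m j : ℝ)| :=
    pos_of_mul_pos_right ((mul_pos pi_pos (one_pos.trans_le hk)).trans_le hkm) (by positivity)
  refine (norm_fourierCoeff_tanh_sum_sin_le k m (j := j) ?_).trans ?_
  · exact_mod_cast abs_pos.1 hmj_pos
  rw [div_le_iff₀ (by positivity)]
  calc π * |k j| ≤ π * ∑ i, |k i| := by gcongr
    _ ≤ ε * (2 * |(m j : ℝ)|) := hkm.trans_eq (by ring)
end

section
/- Let β > 0, Δt > 0, t ∈ ℝ, and let u : ℝ → ℝ be three times continuously differentiable on an interval containing [t − Δt, t + max(1, β)·Δt] with |u'''(s)| ≤ M there. Then there exists a constant C(β) > 0, depending only on β, such that |((2β + 1)/2)·u(t + Δt) − 2β·u(t) + ((2β − 1)/2)·u(t − Δt) − Δt·u'(t + β·Δt)| ≤ C(β)·M·Δt³. -/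
/-!
Subtracting the second-order Taylor polynomial of `u` at `t` reduces the claim to Taylor
remainders: the BDF2-β combination is exact on quadratics, so the residual equals the same
combination of the second-order remainders at `t ± Δt` minus `Δt` times the first-order
remainder of `u'` at `t + βΔt`. Two applications of the mean value inequality bound these by
`M (max 1 β)² Δt³` and `M (max 1 β) β Δt²`.
-/

open Set

section TaylorRemainder

variable {s : Set ℝ} {f f' f'' f''' : ℝ → ℝ} {t x K M R : ℝ}

theorem abs_sub_taylor_one_le (hs : Convex ℝ s) (ht : t ∈ s) (hx : x ∈ s)
    (hf : ∀ y ∈ s, HasDerivWithinAt f (f' y) s y) (hK : ∀ y ∈ s, |f' y - f' t| ≤ K) :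
    |f x - f t - (x - t) * f' t| ≤ K * |x - t| := by
  have hg : ∀ y ∈ s, HasDerivWithinAt (fun y => f y - (y - t) * f' t) (f' y - f' t) s y :=
    fun y hy =>
      ((hf y hy).sub (((hasDerivWithinAt_id y s).sub_const t).mul_const (f' t))).congr_deriv
        (by simp)
  have := hs.norm_image_sub_le_of_norm_hasDerivWithin_le hg hK ht hx
  rw [Real.norm_eq_abs, Real.norm_eq_abs] at this
  convert this using 2
  ring

theorem abs_sub_taylor_two_le (hs : Convex ℝ s) (ht : t ∈ s) (hx : x ∈ s)
    (hf : ∀ y ∈ s, HasDerivWithinAt f (f' y) s y)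
    (hK : ∀ y ∈ s, |f' y - f' t - (y - t) * f'' t| ≤ K) :
    |f x - f t - (x - t) * f' t - (x - t) ^ 2 / 2 * f'' t| ≤ K * |x - t| := by
  have hg : ∀ y ∈ s, HasDerivWithinAt (fun y => f y - (y - t) * f' t - (y - t) ^ 2 / 2 * f'' t)
      (f' y - f' t - (y - t) * f'' t) s y := fun y hy => by
    have hlin := ((hasDerivWithinAt_id y s).sub_const t).mul_const (f' t)
    have hquad := ((((hasDerivWithinAt_id y s).sub_const t).pow 2).div_const 2).mul_const (f'' t)
    exact (((hf y hy).sub hlin).sub hquad).congr_deriv (by simp only [id]; ring)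
  have := hs.norm_image_sub_le_of_norm_hasDerivWithin_le hg hK ht hx
  rw [Real.norm_eq_abs, Real.norm_eq_abs] at this
  convert this using 2
  ring

theorem abs_sub_taylor_one_le_of_abs_deriv_le (hs : Convex ℝ s) (ht : t ∈ s) (hx : x ∈ s)
    (hf : ∀ y ∈ s, HasDerivWithinAt f (f' y) s y) (hf' : ∀ y ∈ s, HasDerivWithinAt f' (f'' y) s y)
    (hM : ∀ y ∈ s, |f'' y| ≤ M) (hR : ∀ y ∈ s, |y - t| ≤ R) :
    |f x - f t - (x - t) * f' t| ≤ M * R * |x - t| := by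
  have hM₀ : 0 ≤ M := (abs_nonneg _).trans (hM t ht)
  refine abs_sub_taylor_one_le hs ht hx hf fun y hy => ?_
  calc |f' y - f' t| ≤ M * |y - t| := by
        simpa using hs.norm_image_sub_le_of_norm_hasDerivWithin_le hf' hM ht hy
    _ ≤ M * R := mul_le_mul_of_nonneg_left (hR y hy) hM₀

theorem abs_sub_taylor_two_le_of_abs_deriv_le (hs : Convex ℝ s) (ht : t ∈ s) (hx : x ∈ s)
    (hf : ∀ y ∈ s, HasDerivWithinAt f (f' y) s y) (hf' : ∀ y ∈ s, HasDerivWithinAt f' (f'' y) s y)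
    (hf'' : ∀ y ∈ s, HasDerivWithinAt f'' (f''' y) s y)
    (hM : ∀ y ∈ s, |f''' y| ≤ M) (hR : ∀ y ∈ s, |y - t| ≤ R) :
    |f x - f t - (x - t) * f' t - (x - t) ^ 2 / 2 * f'' t| ≤ M * R ^ 2 * |x - t| := by
  have hMR : 0 ≤ M * R :=
    mul_nonneg ((abs_nonneg _).trans (hM t ht)) ((abs_nonneg (t - t)).trans (hR t ht))
  refine abs_sub_taylor_two_le hs ht hx hf fun y hy => ?_
  calc |f' y - f' t - (y - t) * f'' t| ≤ M * R * |y - t| :=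
        abs_sub_taylor_one_le_of_abs_deriv_le hs ht hy hf' hf'' hM hR
    _ ≤ M * R ^ 2 := by rw [sq, ← mul_assoc]; exact mul_le_mul_of_nonneg_left (hR y hy) hMR

end TaylorRemainder

theorem bdf2_beta_residual_eq_taylor (β Δt t : ℝ) (u u' : ℝ → ℝ) (a b : ℝ) :
    (2 * β + 1) / 2 * u (t + Δt) - 2 * β * u t + (2 * β - 1) / 2 * u (t - Δt)
        - Δt * u' (t + β * Δt) =
      (2 * β + 1) / 2 * (u (t + Δt) - u t - (t + Δt - t) * a - (t + Δt - t) ^ 2 / 2 * b)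
        + (2 * β - 1) / 2 * (u (t - Δt) - u t - (t - Δt - t) * a - (t - Δt - t) ^ 2 / 2 * b)
        - Δt * (u' (t + β * Δt) - a - (t + β * Δt - t) * b) := by
  ring

theorem abs_bdf2_combination_le {β Δt e₁ e₂ d K L : ℝ} (hβ : 0 ≤ β) (hΔt : 0 ≤ Δt)
    (h₁ : |e₁| ≤ K) (h₂ : |e₂| ≤ K) (hd : |d| ≤ L) :
    |(2 * β + 1) / 2 * e₁ + (2 * β - 1) / 2 * e₂ - Δt * d| ≤ (2 * β + 1) * K + Δt * L := by
  have hA : 0 ≤ (2 * β + 1) / 2 := by positivity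
  have hB : |(2 * β - 1) / 2| ≤ (2 * β + 1) / 2 := abs_le.2 ⟨by linarith, by linarith⟩
  calc |(2 * β + 1) / 2 * e₁ + (2 * β - 1) / 2 * e₂ - Δt * d|
      ≤ |(2 * β + 1) / 2 * e₁| + |(2 * β - 1) / 2 * e₂| + |Δt * d| :=
        (abs_sub _ _).trans (by gcongr; exact abs_add_le _ _)
    _ = (2 * β + 1) / 2 * |e₁| + |(2 * β - 1) / 2| * |e₂| + Δt * |d| := by
        rw [abs_mul, abs_mul, abs_mul, abs_of_nonneg hA, abs_of_nonneg hΔt]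
    _ ≤ (2 * β + 1) / 2 * K + (2 * β + 1) / 2 * K + Δt * L := by
        gcongr ?_ + ?_ + ?_
        · exact mul_le_mul_of_nonneg_left h₁ hA
        · exact mul_le_mul hB h₂ (abs_nonneg _) hA
        · exact mul_le_mul_of_nonneg_left hd hΔt
    _ = (2 * β + 1) * K + Δt * L := by ring

/-- local truncation error of the shifted BDF2-β formula: for each
`β > 0` there is `C(β) > 0` such that
`|((2β+1)/2) u(t+Δt) − 2β u(t) + ((2β−1)/2) u(t−Δt) − Δt u'(t+βΔt)| ≤ C(β) M Δt³`
whenever `u` is three times continuously differentiable with `|u'''| ≤ M` on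
`[t − Δt, t + max(1,β) Δt]`. -/
theorem bdf2_beta_truncation_error (β : ℝ) (hβ : 0 < β) :
    ∃ C : ℝ, 0 < C ∧
      ∀ (Δt t M : ℝ) (u u' u'' u''' : ℝ → ℝ), 0 < Δt →
        (∀ s ∈ Set.Icc (t - Δt) (t + max 1 β * Δt),
          HasDerivWithinAt u (u' s) (Set.Icc (t - Δt) (t + max 1 β * Δt)) s) →
        (∀ s ∈ Set.Icc (t - Δt) (t + max 1 β * Δt),
          HasDerivWithinAt u' (u'' s) (Set.Icc (t - Δt) (t + max 1 β * Δt)) s) →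
        (∀ s ∈ Set.Icc (t - Δt) (t + max 1 β * Δt),
          HasDerivWithinAt u'' (u''' s) (Set.Icc (t - Δt) (t + max 1 β * Δt)) s) →
        ContinuousOn u''' (Set.Icc (t - Δt) (t + max 1 β * Δt)) →
        (∀ s ∈ Set.Icc (t - Δt) (t + max 1 β * Δt), |u''' s| ≤ M) →
        |((2 * β + 1) / 2) * u (t + Δt) - 2 * β * u t +
            ((2 * β - 1) / 2) * u (t - Δt) - Δt * u' (t + β * Δt)| ≤
          C * M * Δt ^ 3 := by
  refine ⟨(2 * β + 1) * max 1 β ^ 2 + max 1 β * β, by positivity, ?_⟩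
  intro Δt t M u u' u'' u''' hΔt hu hu' hu'' _ hM
  set c := max 1 β
  have hc : 1 ≤ c := le_max_left 1 β
  have hcβ : β ≤ c := le_max_right 1 β
  have hI : Convex ℝ (Icc (t - Δt) (t + c * Δt)) := convex_Icc _ _
  have hR : ∀ y ∈ Icc (t - Δt) (t + c * Δt), |y - t| ≤ c * Δt := fun y hy =>
    abs_le.2 ⟨by nlinarith [hy.1], by linarith [hy.2]⟩
  have ht : t ∈ Icc (t - Δt) (t + c * Δt) := ⟨by linarith, by nlinarith⟩
  have hfwd := abs_sub_taylor_two_le_of_abs_deriv_le hI ht ⟨by linarith, by nlinarith⟩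
    hu hu' hu'' hM hR (x := t + Δt)
  have hbwd := abs_sub_taylor_two_le_of_abs_deriv_le hI ht ⟨le_rfl, by nlinarith⟩
    hu hu' hu'' hM hR (x := t - Δt)
  have hmid := abs_sub_taylor_one_le_of_abs_deriv_le hI ht ⟨by nlinarith, by nlinarith⟩
    hu' hu'' hM hR (x := t + β * Δt)
  rw [show |t + Δt - t| = Δt by simp [hΔt.le]] at hfwd
  rw [show |t - Δt - t| = Δt by simp [hΔt.le]] at hbwd
  rw [show |t + β * Δt - t| = β * Δt by
    rw [add_sub_cancel_left, abs_of_pos (mul_pos hβ hΔt)]] at hmid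
  have key := abs_bdf2_combination_le hβ.le hΔt.le hfwd hbwd hmid
  rw [← bdf2_beta_residual_eq_taylor] at key
  exact key.trans_eq (by ring)
end
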